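/- arXiv:1611.10168 — 3 statements merged into one kernel-verified Lean document; each statement's English description precedes it below -/
import Mathlib

section
/- If the operator 𝒜 = ∑_{α ⊆ {1,…,N}} ⟨A_α(k, x_α)·⟩_α on L²([0,1)^N, ℂ^M) with continuous (or staircase) matrix kernels A_α is the zero operator, then all kernels A_α vanish identically; i.e. the representation of operators in the mixed algebra ℒ is unique. -/
open MeasureTheory
noncomputable section
def cube (N : ℕ) : Set (Fin N → ℝ) := Set.univ.pi fun _ => Set.Ico (0:ℝ) 1
def dia {N : ℕ} (α : Finset (Fin N)) (x k : Fin N → ℝ) : Fin N → ℝ :=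
  fun i => if i ∈ α then x i else k i
namespace Stmt6Aux

lemma measurableSet_cube (N : ℕ) : MeasurableSet (cube N) :=
  MeasurableSet.univ_pi fun _ => measurableSet_Ico

lemma mem_cube {N : ℕ} {x : Fin N → ℝ} : x ∈ cube N ↔ ∀ i, 0 ≤ x i ∧ x i < 1 := by
  simp [cube, Set.mem_pi]

lemma volume_cube (N : ℕ) : volume (cube N) = 1 := by
  rw [cube, volume_pi_pi]; simp [Real.volume_Ico]

lemma exists_box (N : ℕ) (z : Fin N → ℝ) (hz : z ∈ cube N) (ε : ℝ) (hε : 0 < ε) :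
    ∃ B : Set (Fin N → ℝ), B ⊆ cube N ∧ volume B ≠ 0 ∧ ∀ b ∈ B, dist z b < ε := by
  refine ⟨Set.pi Set.univ (fun i => Set.Ico (z i) (min (z i + ε/2) 1)), ?_, ?_, ?_⟩
  · intro b hb
    rw [Set.mem_pi] at hb
    rw [mem_cube]
    intro i
    have := hb i (Set.mem_univ i)
    have hzi := (mem_cube.mp hz) i
    constructor
    · exact le_trans hzi.1 this.1
    · exact lt_of_lt_of_le this.2 (min_le_right _ _)
  · rw [volume_pi_pi]
    rw [Finset.prod_ne_zero_iff]
    intro i _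
    rw [Real.volume_Ico]
    have hzi := (mem_cube.mp hz) i
    have : z i < min (z i + ε/2) 1 := lt_min (by linarith) hzi.2
    simp only [ne_eq, ENNReal.ofReal_eq_zero, not_le]
    linarith
  · intro b hb
    rw [Set.mem_pi] at hb
    rw [dist_pi_lt_iff hε]
    intro i
    have := hb i (Set.mem_univ i)
    rw [Real.dist_eq, abs_lt]
    have h2 : b i < z i + ε/2 := lt_of_lt_of_le this.2 (min_le_left _ _)
    constructor <;> [linarith [this.2, this.1]; linarith [this.1]]

lemma integrable_of_bounded_cube {N : ℕ} {E : Type*} [NormedAddCommGroup E]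
    {f : (Fin N → ℝ) → E} {s : Set (Fin N → ℝ)}
    (hs : volume s < ⊤) (hm : AEStronglyMeasurable f (volume.restrict s))
    {c : ℝ} (hb : ∀ x, ‖f x‖ ≤ c) :
    Integrable f (volume.restrict s) := by
  haveI : IsFiniteMeasure (volume.restrict s) :=
    ⟨by rw [Measure.restrict_apply_univ]; exact hs⟩
  exact memLp_one_iff_integrable.mp
    (MemLp.of_bound hm c (Filter.Eventually.of_forall hb))

lemma slice_x_contOn {N M : ℕ}
    {A : Finset (Fin N) → (Fin N → ℝ) → (Fin N → ℝ) → Matrix (Fin M) (Fin M) ℂ}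
    (hAcont : ∀ α i j, ContinuousOn (fun p : (Fin N → ℝ) × (Fin N → ℝ) => A α p.1 p.2 i j)
      ((cube N) ×ˢ (cube N)))
    (α : Finset (Fin N)) (i j : Fin M) {k : Fin N → ℝ} (hk : k ∈ cube N) :
    ContinuousOn (fun x => A α k x i j) (cube N) := by
  have h := (hAcont α i j).comp
    ((continuous_const.prodMk continuous_id).continuousOn :
      ContinuousOn (fun x : Fin N → ℝ => (k, x)) (cube N))
    (fun x hx => Set.mk_mem_prod hk hx)
  exact h

lemma slice_k_contOn {N M : ℕ}
    {A : Finset (Fin N) → (Fin N → ℝ) → (Fin N → ℝ) → Matrix (Fin M) (Fin M) ℂ}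
    (hAcont : ∀ α i j, ContinuousOn (fun p : (Fin N → ℝ) × (Fin N → ℝ) => A α p.1 p.2 i j)
      ((cube N) ×ˢ (cube N)))
    (α : Finset (Fin N)) (i j : Fin M) {x : Fin N → ℝ} (hx : x ∈ cube N) :
    ContinuousOn (fun k => A α k x i j) (cube N) := by
  have h := (hAcont α i j).comp
    ((continuous_id.prodMk continuous_const).continuousOn :
      ContinuousOn (fun k : Fin N → ℝ => (k, x)) (cube N))
    (fun k hk => Set.mk_mem_prod hk hx)
  exact h

lemma hyperplane_null (N : ℕ) (i : Fin N) (c : ℝ) :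
    volume {x : Fin N → ℝ | x i = c} = 0 := by
  have : {x : Fin N → ℝ | x i = c}
      = Set.pi Set.univ (fun l => if l = i then {c} else Set.univ) := by
    ext x
    simp only [Set.mem_setOf_eq, Set.mem_pi, Set.mem_univ, forall_true_left]
    constructor
    · intro h l
      by_cases hl : l = i
      · subst hl; simp [h]
      · simp [hl]
    · intro h
      have := h i
      simpa using this
  rw [this, volume_pi_pi]
  apply Finset.prod_eq_zero (Finset.mem_univ i)
  simp

lemma zero_on_cube {N : ℕ} (f : (Fin N → ℝ) → ℂ) (hf : ContinuousOn f (cube N))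
    (h0 : volume ({w | f w ≠ 0} ∩ cube N) = 0) : ∀ z ∈ cube N, f z = 0 := by
  intro z hz
  set E : Set (Fin N → ℝ) := {w | f w = 0} ∩ cube N with hE
  have hcl : z ∈ closure E := by
    rw [Metric.mem_closure_iff]
    intro ε hε
    obtain ⟨B, hBsub, hBpos, hBball⟩ := exists_box N z hz ε hε
    have hnot : ¬ B ⊆ {w | f w ≠ 0} ∩ cube N := fun h => hBpos (measure_mono_null h h0)
    obtain ⟨b, hbB, hb⟩ := Set.not_subset.mp hnot
    refine ⟨b, ⟨?_, hBsub hbB⟩, hBball b hbB⟩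
    by_contra hfb
    exact hb ⟨hfb, hBsub hbB⟩
  have h1 : Filter.Tendsto f (nhdsWithin z E) (nhds (f z)) :=
    (hf z hz).mono_left (nhdsWithin_mono z Set.inter_subset_right)
  have h2 : Filter.Tendsto f (nhdsWithin z E) (nhds 0) := by
    refine Filter.Tendsto.congr' ?_ tendsto_const_nhds
    filter_upwards [self_mem_nhdsWithin] with w hw
    exact hw.1.symm
  have hne : (nhdsWithin z E).NeBot := mem_closure_iff_nhdsWithin_neBot.mp hcl
  exact tendsto_nhds_unique h1 h2

lemma core {N M : ℕ}
    {A : Finset (Fin N) → (Fin N → ℝ) → (Fin N → ℝ) → Matrix (Fin M) (Fin M) ℂ}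
    (hAcont : ∀ α i j, ContinuousOn (fun p : (Fin N → ℝ) × (Fin N → ℝ) => A α p.1 p.2 i j)
      ((cube N) ×ˢ (cube N)))
    (hAbdd : ∀ α, ∃ c, ∀ k x i j, ‖A α k x i j‖ ≤ c)
    (hAdep : ∀ α k x x', (∀ i ∈ α, x i = x' i) → A α k x = A α k x')
    (α₀ : Finset (Fin N)) (k : Fin N → ℝ) (hk : k ∈ cube N)
    (IH : ∀ α, α₀ ⊂ α → ∀ x ∈ cube N, A α k x = 0)
    (hkey : ∀ (j : Fin M) (p q : Fin N → ℚ),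
      ∑ α : Finset (Fin N), (∫ x in cube N,
        (A α k x).mulVec (Set.indicator (Set.pi ↑α₀ fun i => Set.Ico ((p i : ℝ)) ((q i : ℝ)))
            (fun _ => Pi.single j 1) (dia α x k))) = 0)
    (x₀ : Fin N → ℝ) (hx₀ : x₀ ∈ cube N) (hsep : ∀ i ∈ α₀, x₀ i ≠ k i) :
    A α₀ k x₀ = 0 := by
  ext i j
  rw [Matrix.zero_apply]
  -- reduce to norm ≤ ε
  have main : ∀ ε : ℝ, 0 < ε → ‖A α₀ k x₀ i j‖ ≤ ε := by
    intro ε hε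
    -- continuity of the x-slice at x₀
    have hg : ContinuousOn (fun x => A α₀ k x i j) (cube N) := slice_x_contOn hAcont α₀ i j hk
    obtain ⟨δ, hδpos, hδ⟩ := Metric.continuousWithinAt_iff.mp (hg x₀ hx₀) ε hε
    -- choose per-coordinate rational intervals
    have Hpq : ∀ i' : Fin N, ∃ pq : ℚ × ℚ, i' ∈ α₀ →
        (x₀ i' - δ < (pq.1 : ℝ) ∧ (pq.1 : ℝ) ≤ x₀ i' ∧ x₀ i' < (pq.2 : ℝ) ∧
         (pq.2 : ℝ) ≤ x₀ i' + δ ∧ (pq.2 : ℝ) ≤ 1 ∧ k i' ∉ Set.Ico ((pq.1 : ℝ)) ((pq.2 : ℝ))) := by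
      intro i'
      by_cases hi' : i' ∈ α₀
      · have hx₀i := mem_cube.mp hx₀ i'
        have hki := mem_cube.mp hk i'
        rcases lt_or_gt_of_ne (hsep i' hi') with hlt | hgt
        · -- k i' > x₀ i'
          obtain ⟨p, hp1, hp2⟩ := exists_rat_btwn (show x₀ i' - δ < x₀ i' by linarith)
          obtain ⟨q, hq1, hq2⟩ := exists_rat_btwn
            (show x₀ i' < min (k i') (min (x₀ i' + δ) 1) by
              exact lt_min hlt (lt_min (by linarith) hx₀i.2))
          refine ⟨(p, q), fun _ => ⟨hp1, le_of_lt hp2, hq1, ?_, ?_, ?_⟩⟩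
          · exact le_of_lt (lt_of_lt_of_le hq2 (le_trans (min_le_right _ _) (min_le_left _ _)))
          · exact le_of_lt (lt_of_lt_of_le hq2 (le_trans (min_le_right _ _) (min_le_right _ _)))
          · intro hmem
            exact absurd hmem.2 (not_lt.mpr (le_of_lt (lt_of_lt_of_le hq2 (min_le_left _ _))))
        · -- k i' < x₀ i'
          obtain ⟨p, hp1, hp2⟩ := exists_rat_btwn
            (show max (k i') (x₀ i' - δ) < x₀ i' from max_lt hgt (by linarith))
          obtain ⟨q, hq1, hq2⟩ := exists_rat_btwn
            (show x₀ i' < min (x₀ i' + δ) 1 from lt_min (by linarith) hx₀i.2)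
          refine ⟨(p, q), fun _ => ⟨lt_of_le_of_lt (le_max_right _ _) hp1, le_of_lt hp2,
            hq1, le_of_lt (lt_of_lt_of_le hq2 (min_le_left _ _)),
            le_of_lt (lt_of_lt_of_le hq2 (min_le_right _ _)), ?_⟩⟩
          intro hmem
          exact absurd hmem.1 (not_le.mpr (lt_of_le_of_lt (le_max_left _ _) hp1))
      · exact ⟨(0, 1), fun h => absurd h hi'⟩
    choose pq hpq using Hpq
    set p : Fin N → ℚ := fun i' => (pq i').1 with hp_def
    set q : Fin N → ℚ := fun i' => (pq i').2 with hq_def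
    set T : Set (Fin N → ℝ) := Set.pi ↑α₀ (fun i' => Set.Ico ((p i' : ℝ)) ((q i' : ℝ))) with hT_def
    have hT : MeasurableSet T :=
      MeasurableSet.pi (Set.to_countable _) (fun _ _ => measurableSet_Ico)
    have hkey' := hkey j p q
    -- all terms except α₀ vanish
    have hterm : ∀ α : Finset (Fin N), α ≠ α₀ →
        (∫ x in cube N, (A α k x).mulVec
          (Set.indicator T (fun _ => Pi.single j 1) (dia α x k))) = 0 := by
      intro α hne
      by_cases hsub : α₀ ⊆ α
      · have hss : α₀ ⊂ α := Finset.ssubset_iff_subset_ne.mpr ⟨hsub, hne.symm⟩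
        have heq : Set.EqOn (fun x => (A α k x).mulVec
            (Set.indicator T (fun _ => Pi.single j 1) (dia α x k)))
            (fun _ => (0 : Fin M → ℂ)) (cube N) := fun x hx => by
          simp only [IH α hss x hx, Matrix.zero_mulVec]
        rw [setIntegral_congr_fun (measurableSet_cube N) heq, integral_zero]
      · obtain ⟨i₀, hi₀α₀, hi₀α⟩ := Finset.not_subset.mp hsub
        have hzero' : ∀ x : Fin N → ℝ,
            Set.indicator T (fun _ => (Pi.single j 1 : Fin M → ℂ)) (dia α x k) = 0 := by
          intro x
          apply Set.indicator_of_notMem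
          intro hmem
          rw [Set.mem_pi] at hmem
          have h1 := hmem i₀ (by simpa using hi₀α₀)
          have h2 : dia α x k i₀ = k i₀ := by simp [dia, hi₀α]
          rw [h2] at h1
          exact (hpq i₀ hi₀α₀).2.2.2.2.2 h1
        simp only [hzero', Matrix.mulVec_zero, integral_zero]
    have hα₀ : (∫ x in cube N, (A α₀ k x).mulVec
        (Set.indicator T (fun _ => Pi.single j 1) (dia α₀ x k))) = 0 := by
      rw [Finset.sum_eq_single α₀ (fun b _ hb => hterm b hb)
        (fun h => absurd (Finset.mem_univ _) h)] at hkey'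
      exact hkey'
    -- rewrite the indicator
    have hdia : ∀ x : Fin N → ℝ, (dia α₀ x k ∈ T ↔ x ∈ T) := by
      intro x
      simp only [hT_def, Set.mem_pi]
      constructor <;> intro h i' hi'
      · have := h i' hi'
        rwa [show dia α₀ x k i' = x i' by simp [dia, Finset.mem_coe.mp hi']] at this
      · have := h i' hi'
        rwa [show dia α₀ x k i' = x i' by simp [dia, Finset.mem_coe.mp hi']]
    have hint_eq : (fun x => (A α₀ k x).mulVec
          (Set.indicator T (fun _ => (Pi.single j 1 : Fin M → ℂ)) (dia α₀ x k)))
        = fun x => Set.indicator T (fun x' => (A α₀ k x').mulVec (Pi.single j 1)) x := by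
      funext x
      by_cases hx : x ∈ T
      · rw [Set.indicator_of_mem hx, Set.indicator_of_mem ((hdia x).mpr hx)]
      · rw [Set.indicator_of_notMem hx,
          Set.indicator_of_notMem (fun h => hx ((hdia x).mp h)), Matrix.mulVec_zero]
    rw [hint_eq, setIntegral_indicator hT] at hα₀
    set S : Set (Fin N → ℝ) := cube N ∩ T with hS_def
    have hSfin : volume S < ⊤ := lt_of_le_of_lt (measure_mono Set.inter_subset_left)
      (by rw [volume_cube]; exact ENNReal.one_lt_top)
    haveI : IsFiniteMeasure (volume.restrict S) :=
      ⟨by rw [Measure.restrict_apply_univ]; exact hSfin⟩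
    obtain ⟨c, hc⟩ := hAbdd α₀
    have hF_eq : (fun x => (A α₀ k x).mulVec (Pi.single j 1 : Fin M → ℂ))
        = fun x => fun i' => A α₀ k x i' j := by
      funext x
      rw [Matrix.mulVec_single]
      funext i'
      exact mul_one _
    have hFcont : ContinuousOn
        (fun x => (A α₀ k x).mulVec (Pi.single j 1 : Fin M → ℂ)) (cube N) := by
      rw [hF_eq]
      apply continuousOn_pi.mpr
      intro i'
      exact slice_x_contOn hAcont α₀ i' j hk
    have hFm : AEStronglyMeasurable
        (fun x => (A α₀ k x).mulVec (Pi.single j 1 : Fin M → ℂ)) (volume.restrict S) :=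
      (hFcont.aestronglyMeasurable (measurableSet_cube N)).mono_measure
        (Measure.restrict_mono Set.inter_subset_left le_rfl)
    have hFbdd : ∀ x, ‖(A α₀ k x).mulVec (Pi.single j 1 : Fin M → ℂ)‖ ≤ max c 0 := by
      intro x
      rw [congrFun hF_eq x]
      refine (pi_norm_le_iff_of_nonneg (le_max_right _ _)).mpr ?_
      intro i'
      refine le_trans ?_ (le_max_left _ _)
      simpa using hc k x i' j
    have hFint : Integrable (fun x => (A α₀ k x).mulVec (Pi.single j 1 : Fin M → ℂ))
        (volume.restrict S) := integrable_of_bounded_cube hSfin hFm hFbdd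
    have hscalar : ∫ x in S, A α₀ k x i j = 0 := by
      have hproj := (ContinuousLinearMap.proj (R := ℂ) (φ := fun _ : Fin M => ℂ)
        i).integral_comp_comm hFint
      rw [hα₀] at hproj
      simp only [ContinuousLinearMap.proj_apply, map_zero] at hproj
      rw [← hproj]
      apply setIntegral_congr_fun (measurableSet_cube N |>.inter hT)
      intro x _
      simp [Matrix.mulVec_single]
    have hgm : AEStronglyMeasurable (fun x => A α₀ k x i j) (volume.restrict S) :=
      ((slice_x_contOn hAcont α₀ i j hk).aestronglyMeasurable
        (measurableSet_cube N)).mono_measure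
        (Measure.restrict_mono Set.inter_subset_left le_rfl)
    have hgint : Integrable (fun x => A α₀ k x i j) (volume.restrict S) :=
      integrable_of_bounded_cube hSfin hgm (c := c)
        (fun x => by simpa using hc k x i j)
    -- the volume of S is positive
    have hSeq : S = Set.pi Set.univ (fun i' => if i' ∈ α₀ then
        Set.Ico (max 0 ((p i' : ℝ))) (min 1 ((q i' : ℝ))) else Set.Ico 0 1) := by
      ext x
      constructor
      · rintro ⟨hxc, hxT⟩
        rw [Set.mem_pi]
        intro i' _
        by_cases hi' : i' ∈ α₀
        · have h1 := mem_cube.mp hxc i'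
          have h2 := hxT i' (Finset.mem_coe.mpr hi')
          rw [Set.mem_Ico] at h2
          simp only [hi', if_true, Set.mem_Ico]
          exact ⟨max_le h1.1 h2.1, lt_min h1.2 h2.2⟩
        · simp only [hi', if_false, Set.mem_Ico]
          exact mem_cube.mp hxc i'
      · intro h
        rw [Set.mem_pi] at h
        constructor
        · rw [mem_cube]
          intro i'
          have := h i' (Set.mem_univ i')
          by_cases hi' : i' ∈ α₀
          · simp only [hi', if_true, Set.mem_Ico] at this
            exact ⟨le_trans (le_max_left _ _) this.1, lt_of_lt_of_le this.2 (min_le_left _ _)⟩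
          · simpa only [hi', if_false, Set.mem_Ico] using this
        · intro i' hi'
          have hi'' : i' ∈ α₀ := Finset.mem_coe.mp hi'
          have := h i' (Set.mem_univ i')
          simp only [hi'', if_true, Set.mem_Ico] at this
          rw [Set.mem_Ico]
          exact ⟨le_trans (le_max_right _ _) this.1, lt_of_lt_of_le this.2 (min_le_right _ _)⟩
    have hvne : volume S ≠ 0 := by
      rw [hSeq, volume_pi_pi]
      rw [Finset.prod_ne_zero_iff]
      intro i' _
      by_cases hi' : i' ∈ α₀
      · have hs := hpq i' hi'
        have h1 := mem_cube.mp hx₀ i'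
        simp only [hi', if_true, Real.volume_Ico]
        have : max 0 ((p i' : ℝ)) < min 1 ((q i' : ℝ)) :=
          lt_of_le_of_lt (max_le h1.1 hs.2.1) (lt_min h1.2 hs.2.2.1)
        exact (ENNReal.ofReal_pos.mpr (by linarith)).ne'
      · simp only [hi', if_false, Real.volume_Ico]
        exact (ENNReal.ofReal_pos.mpr (by norm_num)).ne'
    set v := (volume S).toReal with hv_def
    have hvpos : 0 < v := ENNReal.toReal_pos hvne hSfin.ne
    have hball : ∀ x ∈ S, ‖A α₀ k x i j - A α₀ k x₀ i j‖ ≤ ε := by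
      intro x hx
      have hxc : x ∈ cube N := hx.1
      have hxT : ∀ i' ∈ α₀, x i' ∈ Set.Ico ((p i' : ℝ)) ((q i' : ℝ)) :=
        fun i' hi' => hx.2 i' (Finset.mem_coe.mpr hi')
      have hx'c : dia α₀ x x₀ ∈ cube N := mem_cube.mpr fun i' => by
        by_cases hi' : i' ∈ α₀
        · simpa [dia, hi'] using mem_cube.mp hxc i'
        · simpa [dia, hi'] using mem_cube.mp hx₀ i'
      have heqA : A α₀ k x = A α₀ k (dia α₀ x x₀) :=
        hAdep α₀ k x (dia α₀ x x₀) (fun i' hi' => by simp [dia, hi'])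
      have hdist : dist (dia α₀ x x₀) x₀ < δ := by
        rw [dist_pi_lt_iff hδpos]
        intro i'
        by_cases hi' : i' ∈ α₀
        · have hxi := hxT i' hi'
          have hs := hpq i' hi'
          rw [Set.mem_Ico] at hxi
          simp only [dia, hi', if_true]
          rw [Real.dist_eq, abs_lt]
          constructor
          · linarith [hs.1, hxi.1]
          · linarith [hs.2.2.2.1, hxi.2]
        · simpa [dia, hi'] using hδpos
      have hnear := hδ hx'c hdist
      rw [heqA]
      refine le_of_lt ?_
      simpa [Complex.dist_eq] using hnear
    have hsplit : (∫ x in S, (A α₀ k x i j - A α₀ k x₀ i j)) = - (v • (A α₀ k x₀ i j)) := by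
      rw [integral_sub hgint (integrable_const _), hscalar, setIntegral_const, zero_sub]
      rfl
    have hnorm : ‖∫ x in S, (A α₀ k x i j - A α₀ k x₀ i j)‖ ≤ ε * v :=
      norm_setIntegral_le_of_norm_le_const hSfin hball
    rw [hsplit, norm_neg, norm_smul, Real.norm_eq_abs, abs_of_pos hvpos] at hnorm
    have : v * ‖A α₀ k x₀ i j‖ ≤ v * ε := by
      calc v * ‖A α₀ k x₀ i j‖ ≤ ε * v := hnorm
      _ = v * ε := mul_comm _ _
    exact le_of_mul_le_mul_left this hvpos
  -- conclude
  have h0 : ‖A α₀ k x₀ i j‖ ≤ 0 := by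
    by_contra h
    push_neg at h
    have := main (‖A α₀ k x₀ i j‖ / 2) (by linarith)
    linarith
  have := le_antisymm h0 (norm_nonneg _)
  exact (norm_eq_zero.mp this)

end Stmt6Aux

open Stmt6Aux

/-- if the mixed operator `𝒜 = ∑_{α ⊆ {1,…,N}} ⟨A_α(k,x_α)·⟩_α` on
`L²([0,1)^N, ℂ^M)` with continuous matrix kernels is the zero operator, then all the
kernels `A_α` vanish identically on the cube: the representation in `ℒ` is unique.
(For `α = ∅` the summand is the multiplication operator `u ↦ A_∅(k)u(k)`, realized here
by integration of a kernel not depending on `x` over the cube of volume one.) -/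
theorem stmt_6 (N M : ℕ) (hM : 0 < M)
    (A : Finset (Fin N) → (Fin N → ℝ) → (Fin N → ℝ) → Matrix (Fin M) (Fin M) ℂ)
    (hAcont : ∀ α i j, ContinuousOn (fun p : (Fin N → ℝ) × (Fin N → ℝ) => A α p.1 p.2 i j)
      ((cube N) ×ˢ (cube N)))
    (hAbdd : ∀ α, ∃ c, ∀ k x i j, ‖A α k x i j‖ ≤ c)
    -- each kernel A_α depends on x only through the coordinates in α
    (hAdep : ∀ α k x x', (∀ i ∈ α, x i = x' i) → A α k x = A α k x')
    -- 𝒜 is the zero operator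
    (hzero : ∀ u : (Fin N → ℝ) → (Fin M → ℂ), Measurable u →
      (∃ c, ∀ x i, ‖u x i‖ ≤ c) →
      ∀ᵐ k ∂(volume.restrict (cube N)),
        ∑ α : Finset (Fin N),
          (∫ x in cube N, (A α k x).mulVec (u (dia α x k))) = 0) :
    ∀ α : Finset (Fin N), ∀ k ∈ cube N, ∀ x ∈ cube N, A α k x = 0 := by
  suffices H : ∀ n : ℕ, ∀ α : Finset (Fin N), (αᶜ).card = n →
      ∀ k ∈ cube N, ∀ x ∈ cube N, A α k x = 0 by
    intro α
    exact H (αᶜ).card α rfl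
  intro n
  induction n using Nat.strong_induction_on with
  | _ n IH =>
    intro α₀ hcard
    have IH' : ∀ α : Finset (Fin N), α₀ ⊂ α → ∀ k ∈ cube N, ∀ x ∈ cube N, A α k x = 0 := by
      intro α hss
      refine IH (αᶜ).card ?_ α rfl
      have h1 : α₀.card < α.card := Finset.card_lt_card hss
      have h2 : α.card ≤ N := le_trans (Finset.card_le_univ α) (by simp)
      rw [← hcard, Finset.card_compl, Finset.card_compl, Fintype.card_fin]
      omega
    -- the countable family of test functions, a.e. statement
    have key : ∀ᵐ k ∂(volume.restrict (cube N)), k ∈ cube N ∧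
        ∀ (j : Fin M) (p q : Fin N → ℚ),
        ∑ α : Finset (Fin N), (∫ x in cube N,
          (A α k x).mulVec (Set.indicator
            (Set.pi (↑α₀ : Set (Fin N)) fun i => Set.Ico ((p i : ℝ)) ((q i : ℝ)))
            (fun _ => (Pi.single j 1 : Fin M → ℂ)) (dia α x k))) = 0 := by
      refine (ae_restrict_mem (measurableSet_cube N)).and ?_
      rw [MeasureTheory.ae_all_iff]
      intro j
      rw [MeasureTheory.ae_all_iff]
      intro p
      rw [MeasureTheory.ae_all_iff]
      intro q
      have hTm : MeasurableSet
          (Set.pi (↑α₀ : Set (Fin N)) fun i => Set.Ico ((p i : ℝ)) ((q i : ℝ))) :=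
        MeasurableSet.pi (Set.to_countable _) fun _ _ => measurableSet_Ico
      refine hzero _ (measurable_const.indicator hTm) ⟨1, fun x i' => ?_⟩
      by_cases hx : x ∈ Set.pi (↑α₀ : Set (Fin N)) fun i => Set.Ico ((p i : ℝ)) ((q i : ℝ))
      · rw [Set.indicator_of_mem hx]
        rcases eq_or_ne i' j with h | h <;> simp [Pi.single_apply, h]
      · rw [Set.indicator_of_notMem hx]
        simp
    have hstep : ∀ᵐ k ∂(volume.restrict (cube N)), ∀ x ∈ cube N, A α₀ k x = 0 := by
      filter_upwards [key] with k hkk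
      obtain ⟨hk, hkey⟩ := hkk
      have hsepzero : ∀ x₀ ∈ cube N, (∀ i ∈ α₀, x₀ i ≠ k i) → A α₀ k x₀ = 0 :=
        fun x₀ hx₀ hsep => core hAcont hAbdd hAdep α₀ k hk
          (fun α hss x hx => IH' α hss k hk x hx) hkey x₀ hx₀ hsep
      intro x hx
      ext i j
      rw [Matrix.zero_apply]
      refine zero_on_cube (fun x => A α₀ k x i j) (slice_x_contOn hAcont α₀ i j hk) ?_ x hx
      apply measure_mono_null
        (t := ⋃ i' : Fin N, {y : Fin N → ℝ | i' ∈ α₀ ∧ y i' = k i'})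
      · rintro y ⟨hy1, hy2⟩
        by_contra hnot
        simp only [Set.mem_iUnion, Set.mem_setOf_eq, not_exists, not_and] at hnot
        refine hy1 ?_
        show A α₀ k y i j = 0
        rw [hsepzero y hy2 (fun i' hi' h => hnot i' hi' h)]
        simp
      · refine measure_iUnion_null fun i' => ?_
        exact measure_mono_null (fun y hy => hy.2) (hyperplane_null N i' (k i'))
    intro k hk x hx
    ext i j
    rw [Matrix.zero_apply]
    refine zero_on_cube (fun k' => A α₀ k' x i j) (slice_k_contOn hAcont α₀ i j hx) ?_ k hk
    have hae : ∀ᵐ k' ∂(volume.restrict (cube N)), A α₀ k' x i j = 0 := by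
      filter_upwards [hstep] with k' hk'
      rw [hk' x hx]
      simp
    have := ae_iff.mp hae
    rwa [Measure.restrict_apply' (measurableSet_cube N)] at this
end
end

section
/- The partial trace is cyclic: for partial-integral operators 𝒜 = ⟨A(k,x_α)·⟩_α and ℬ = ⟨B(k,x_β)·⟩_β with bounded measurable kernels, τ_{α∪β}(𝒜ℬ) = τ_{α∪β}(ℬ𝒜), where τ_γ(⟨C(k,x_γ)·⟩_γ)(k_{γ̄}) := Tr ∫_{[0,1)^{|γ|}} C(k_{γ̄}⋄x_γ, x_γ) dx_γ. -/
open MeasureTheory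

noncomputable section

/-- The composed kernel of `⟨A·⟩_α ⟨B·⟩_β`:
`(A∘B)(k,x_{α∪β}) = ∫ A(k, x_{α\β}⋄z_{α∩β}) B(k_ᾱ⋄z_{α∩β}⋄x_{α\β}, x_β) dz_{α∩β}`. -/
def pComp {N M : ℕ} (α β : Finset (Fin N))
    (A B : (Fin N → ℝ) → (Fin N → ℝ) → Matrix (Fin M) (Fin M) ℂ) :
    (Fin N → ℝ) → (Fin N → ℝ) → Matrix (Fin M) (Fin M) ℂ :=
  fun k x => Matrix.of fun i j => ∫ z in cube N,
    ((A k (fun l => if l ∈ α ∩ β then z l else x l)) *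
      (B (fun l => if l ∈ α then (if l ∈ β then z l else x l) else k l) x)) i j

/-- The trace component `τ_γ(⟨C·⟩_γ)(k_γ̄) = Tr ∫_{[0,1)^{|γ|}} C(k_γ̄⋄x_γ, x_γ) dx_γ`,
as a function of `k`. -/
def pTrace {N M : ℕ} (γ : Finset (Fin N))
    (C : (Fin N → ℝ) → (Fin N → ℝ) → Matrix (Fin M) (Fin M) ℂ) :
    (Fin N → ℝ) → ℂ :=
  fun k => Matrix.trace (Matrix.of fun i j => ∫ x in cube N, C (dia γ x k) x i j)

/-! ### Auxiliary material -/

lemma cube_meas (N : ℕ) : MeasurableSet (cube N) :=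
  MeasurableSet.univ_pi fun _ => measurableSet_Ico

lemma mem_cube {N : ℕ} {x : Fin N → ℝ} : x ∈ cube N ↔ ∀ l, x l ∈ Set.Ico (0:ℝ) 1 := by
  simp [cube]

lemma cube_vol (N : ℕ) : (volume : Measure (Fin N → ℝ)) (cube N) = 1 := by
  simp [cube, volume_pi_pi, Real.volume_Ico]

instance cube_fin (N : ℕ) :
    IsFiniteMeasure ((volume : Measure (Fin N → ℝ)).restrict (cube N)) := by
  constructor
  rw [Measure.restrict_apply_univ, cube_vol]
  exact ENNReal.one_lt_top

def swapEquiv {N : ℕ} (γ : Finset (Fin N)) : (Fin N ⊕ Fin N) ≃ (Fin N ⊕ Fin N) :=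
  Function.Involutive.toPerm
    (Sum.elim (fun l => if l ∈ γ then .inr l else .inl l)
              (fun l => if l ∈ γ then .inl l else .inr l))
    (by rintro (l|l) <;> by_cases h : l ∈ γ <;> simp [h])

def swapMap {N : ℕ} (γ : Finset (Fin N)) :
    ((Fin N → ℝ) × (Fin N → ℝ)) ≃ᵐ ((Fin N → ℝ) × (Fin N → ℝ)) :=
  (MeasurableEquiv.sumPiEquivProdPi (fun _ : Fin N ⊕ Fin N => ℝ)).symm.trans
    ((MeasurableEquiv.piCongrLeft (fun _ : Fin N ⊕ Fin N => ℝ) (swapEquiv γ)).trans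
      (MeasurableEquiv.sumPiEquivProdPi (fun _ : Fin N ⊕ Fin N => ℝ)))

lemma swapMap_apply {N : ℕ} (γ : Finset (Fin N)) (p : (Fin N → ℝ) × (Fin N → ℝ)) :
    swapMap γ p = (fun l => if l ∈ γ then p.2 l else p.1 l,
                   fun l => if l ∈ γ then p.1 l else p.2 l) := by
  have he : ∀ j, (swapEquiv γ).symm j = (Sum.elim (fun l => if l ∈ γ then .inr l else .inl l)
      (fun l => if l ∈ γ then .inl l else .inr l) : Fin N ⊕ Fin N → Fin N ⊕ Fin N) j := by
    intro j; rfl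
  refine Prod.ext ?_ ?_ <;> funext l <;>
    simp only [swapMap, MeasurableEquiv.trans_apply, MeasurableEquiv.coe_sumPiEquivProdPi,
      MeasurableEquiv.coe_sumPiEquivProdPi_symm, Equiv.sumPiEquivProdPi_apply,
      MeasurableEquiv.coe_piCongrLeft, Equiv.piCongrLeft_apply_eq_cast, he] <;>
    by_cases h : l ∈ γ <;>
    simp [h, Equiv.sumPiEquivProdPi_symm_apply]

lemma swapMap_mp {N : ℕ} (γ : Finset (Fin N)) :
    MeasurePreserving (swapMap γ) volume volume :=
  ((volume_measurePreserving_sumPiEquivProdPi (fun _ : Fin N ⊕ Fin N => ℝ)).comp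
    ((volume_measurePreserving_piCongrLeft (fun _ : Fin N ⊕ Fin N => ℝ) (swapEquiv γ)).comp
      (volume_measurePreserving_sumPiEquivProdPi_symm (fun _ : Fin N ⊕ Fin N => ℝ))))

lemma swap_preimage {N : ℕ} (γ : Finset (Fin N)) :
    (swapMap γ) ⁻¹' (cube N ×ˢ cube N) = cube N ×ˢ cube N := by
  ext p
  simp only [Set.mem_preimage, Set.mem_prod, swapMap_apply, mem_cube]
  constructor
  · rintro ⟨h1, h2⟩
    constructor <;> intro l <;> [have a := h1 l; have a := h2 l] <;>
      [have b := h2 l; have b := h1 l] <;> by_cases h : l ∈ γ <;> simp [h] at a b <;> assumption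
  · rintro ⟨h1, h2⟩
    constructor <;> intro l <;> by_cases h : l ∈ γ <;> simp [h] <;>
      [exact h2 l; exact h1 l; exact h1 l; exact h2 l]

lemma swapIntegral {N : ℕ} (γ : Finset (Fin N)) (f : (Fin N → ℝ) × (Fin N → ℝ) → ℂ) :
    ∫ p, f p ∂(((volume : Measure (Fin N → ℝ)).restrict (cube N)).prod
        ((volume : Measure (Fin N → ℝ)).restrict (cube N))) =
    ∫ p, f (swapMap γ p) ∂(((volume : Measure (Fin N → ℝ)).restrict (cube N)).prod
        ((volume : Measure (Fin N → ℝ)).restrict (cube N))) := by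
  rw [Measure.prod_restrict]
  have hmp := (swapMap_mp γ).restrict_preimage ((cube_meas N).prod (cube_meas N))
  rw [swap_preimage] at hmp
  rw [Measure.volume_eq_prod] at hmp
  exact (hmp.integral_comp (swapMap γ).measurableEmbedding f).symm

lemma measurable_mix {N : ℕ} (s t : Finset (Fin N)) (k : Fin N → ℝ) :
    Measurable fun p : (Fin N → ℝ) × (Fin N → ℝ) =>
      (fun l => if l ∈ s then p.2 l else if l ∈ t then p.1 l else k l : Fin N → ℝ) := by
  refine measurable_pi_lambda _ fun l => ?_
  by_cases h1 : l ∈ s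
  · simpa [h1] using (measurable_snd.eval (a := l))
  by_cases h2 : l ∈ t
  · simpa [h1, h2] using (measurable_fst.eval (a := l))
  · simpa [h1, h2] using measurable_const

lemma measurable_arg {N : ℕ} (g : ((Fin N → ℝ) × (Fin N → ℝ)) → Fin N → ℝ)
    (s t : Finset (Fin N)) (k : Fin N → ℝ)
    (hg : ∀ p l, g p l = if l ∈ s then p.2 l else if l ∈ t then p.1 l else k l) :
    Measurable g := by
  have : g = fun p l => if l ∈ s then p.2 l else if l ∈ t then p.1 l else k l := by
    funext p l; exact hg p l
  rw [this]; exact measurable_mix s t k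

lemma integrable_entry {X : Type*} [MeasurableSpace X] {μ : Measure X} [IsFiniteMeasure μ] {M : ℕ}
    (P Q : X → Matrix (Fin M) (Fin M) ℂ)
    (hP : ∀ i j, Measurable fun x => P x i j) (hQ : ∀ i j, Measurable fun x => Q x i j)
    (cP cQ : ℝ) (hcP : ∀ x i j, ‖P x i j‖ ≤ cP)
    (hcQ : ∀ x i j, ‖Q x i j‖ ≤ cQ) (i j : Fin M) :
    Integrable (fun x => (P x * Q x) i j) μ := by
  have hmeas : Measurable fun x => (P x * Q x) i j := by
    simp only [Matrix.mul_apply]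
    exact Finset.measurable_sum _ fun l _ => (hP i l).mul (hQ l j)
  refine Integrable.mono' (integrable_const ((M : ℝ) * (cP * cQ))) hmeas.aestronglyMeasurable
    (Filter.Eventually.of_forall fun x => ?_)
  have h0P : 0 ≤ cP := le_trans (norm_nonneg _) (hcP x i j)
  have h0Q : 0 ≤ cQ := le_trans (norm_nonneg _) (hcQ x i j)
  rw [Matrix.mul_apply]
  calc ‖∑ l, P x i l * Q x l j‖ ≤ ∑ l, ‖P x i l * Q x l j‖ :=
        norm_sum_le _ _
    _ ≤ ∑ _l : Fin M, cP * cQ := by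
        refine Finset.sum_le_sum fun l _ => ?_
        rw [norm_mul]
        exact mul_le_mul (hcP x i l) (hcQ x l j) (norm_nonneg _) h0P
    _ = (M : ℝ) * (cP * cQ) := by simp [mul_comm]

/-- The first-factor kernel of the composition, as a function on the product space. -/
def KerL {N M : ℕ} (α β : Finset (Fin N))
    (A : (Fin N → ℝ) → (Fin N → ℝ) → Matrix (Fin M) (Fin M) ℂ) (k : Fin N → ℝ) :
    ((Fin N → ℝ) × (Fin N → ℝ)) → Matrix (Fin M) (Fin M) ℂ :=
  fun p => A (dia (α ∪ β) p.1 k) (fun l => if l ∈ α ∩ β then p.2 l else p.1 l)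

/-- The second-factor kernel of the composition, as a function on the product space. -/
def KerR {N M : ℕ} (α β : Finset (Fin N))
    (B : (Fin N → ℝ) → (Fin N → ℝ) → Matrix (Fin M) (Fin M) ℂ) (k : Fin N → ℝ) :
    ((Fin N → ℝ) × (Fin N → ℝ)) → Matrix (Fin M) (Fin M) ℂ :=
  fun p => B (fun l => if l ∈ α then (if l ∈ β then p.2 l else p.1 l)
      else dia (α ∪ β) p.1 k l) p.1

lemma measurable_KerL {N M : ℕ} (α β : Finset (Fin N))
    (A : (Fin N → ℝ) → (Fin N → ℝ) → Matrix (Fin M) (Fin M) ℂ)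
    (hA : ∀ i j, Measurable fun p : (Fin N → ℝ) × (Fin N → ℝ) => A p.1 p.2 i j)
    (k : Fin N → ℝ) (i j : Fin M) :
    Measurable fun p => KerL α β A k p i j := by
  have h1 : Measurable fun p : (Fin N → ℝ) × (Fin N → ℝ) => dia (α ∪ β) p.1 k := by
    refine measurable_arg _ ∅ (α ∪ β) k ?_
    intro p l; rw [if_neg (Finset.notMem_empty l)]; rfl
  have h2 : Measurable fun p : (Fin N → ℝ) × (Fin N → ℝ) =>
      (fun l => if l ∈ α ∩ β then p.2 l else p.1 l : Fin N → ℝ) := by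
    refine measurable_arg _ (α ∩ β) Finset.univ k ?_
    intro p l
    by_cases h : l ∈ α ∩ β
    · rw [if_pos h, if_pos h]
    · rw [if_neg h, if_neg h, if_pos (Finset.mem_univ l)]
  exact (hA i j).comp (h1.prodMk h2)

lemma measurable_KerR {N M : ℕ} (α β : Finset (Fin N))
    (B : (Fin N → ℝ) → (Fin N → ℝ) → Matrix (Fin M) (Fin M) ℂ)
    (hB : ∀ i j, Measurable fun p : (Fin N → ℝ) × (Fin N → ℝ) => B p.1 p.2 i j)
    (k : Fin N → ℝ) (i j : Fin M) :
    Measurable fun p => KerR α β B k p i j := by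
  have h1 : Measurable fun p : (Fin N → ℝ) × (Fin N → ℝ) =>
      (fun l => if l ∈ α then (if l ∈ β then p.2 l else p.1 l)
        else dia (α ∪ β) p.1 k l : Fin N → ℝ) := by
    refine measurable_arg _ (α ∩ β) (α ∪ β) k ?_
    intro p l
    by_cases h1 : l ∈ α
    · by_cases h2 : l ∈ β
      · rw [if_pos h1, if_pos h2, if_pos (Finset.mem_inter.mpr ⟨h1, h2⟩)]
      · rw [if_pos h1, if_neg h2, if_neg (fun hc => h2 (Finset.mem_inter.mp hc).2),
          if_pos (Finset.mem_union_left _ h1)]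
    · rw [if_neg h1, if_neg (fun hc => h1 (Finset.mem_inter.mp hc).1)]; rfl
  have h2 : Measurable fun p : (Fin N → ℝ) × (Fin N → ℝ) => p.1 := measurable_fst
  exact (hB i j).comp (h1.prodMk h2)

lemma swap_KerR {N M : ℕ} (α β : Finset (Fin N))
    (B : (Fin N → ℝ) → (Fin N → ℝ) → Matrix (Fin M) (Fin M) ℂ)
    (k : Fin N → ℝ) (p : (Fin N → ℝ) × (Fin N → ℝ)) :
    KerR α β B k (swapMap (α ∩ β) p) = KerL β α B k p := by
  rw [KerR, KerL, swapMap_apply]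
  refine congrArg₂ _ ?_ ?_ <;> funext l <;> simp only [dia] <;>
    split_ifs <;> first | rfl | simp_all

lemma swap_KerL {N M : ℕ} (α β : Finset (Fin N))
    (A : (Fin N → ℝ) → (Fin N → ℝ) → Matrix (Fin M) (Fin M) ℂ)
    (k : Fin N → ℝ) (p : (Fin N → ℝ) × (Fin N → ℝ)) :
    KerL α β A k (swapMap (α ∩ β) p) = KerR β α A k p := by
  rw [KerR, KerL, swapMap_apply]
  refine congrArg₂ _ ?_ ?_ <;> funext l <;> simp only [dia] <;>
    split_ifs <;> first | rfl | simp_all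

lemma pTrace_eq {N M : ℕ} (α β : Finset (Fin N))
    (A B : (Fin N → ℝ) → (Fin N → ℝ) → Matrix (Fin M) (Fin M) ℂ)
    (hA : ∀ i j, Measurable fun p : (Fin N → ℝ) × (Fin N → ℝ) => A p.1 p.2 i j)
    (hB : ∀ i j, Measurable fun p : (Fin N → ℝ) × (Fin N → ℝ) => B p.1 p.2 i j)
    (cA cB : ℝ) (hcA : ∀ k x i j, ‖A k x i j‖ ≤ cA)
    (hcB : ∀ k x i j, ‖B k x i j‖ ≤ cB) (k : Fin N → ℝ) :
    pTrace (α ∪ β) (pComp α β A B) k =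
      ∫ p, Matrix.trace (KerL α β A k p * KerR α β B k p)
        ∂(((volume : Measure (Fin N → ℝ)).restrict (cube N)).prod
          ((volume : Measure (Fin N → ℝ)).restrict (cube N))) := by
  have hint : ∀ i j : Fin M,
      Integrable (fun p => (KerL α β A k p * KerR α β B k p) i j)
        (((volume : Measure (Fin N → ℝ)).restrict (cube N)).prod
          ((volume : Measure (Fin N → ℝ)).restrict (cube N))) := by
    intro i j
    exact integrable_entry _ _ (measurable_KerL α β A hA k) (measurable_KerR α β B hB k)
      cA cB (fun p i j => hcA _ _ i j) (fun p i j => hcB _ _ i j) i j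
  have e1 : pTrace (α ∪ β) (pComp α β A B) k =
      ∑ i, ∫ x in cube N, ∫ z in cube N,
        (KerL α β A k (x, z) * KerR α β B k (x, z)) i i := rfl
  rw [e1]
  calc ∑ i, ∫ x in cube N, ∫ z in cube N,
        (KerL α β A k (x, z) * KerR α β B k (x, z)) i i
      = ∑ i, ∫ p, (KerL α β A k p * KerR α β B k p) i i
          ∂(((volume : Measure (Fin N → ℝ)).restrict (cube N)).prod
            ((volume : Measure (Fin N → ℝ)).restrict (cube N))) :=
        Finset.sum_congr rfl fun i _ => integral_integral (hint i i)
    _ = ∫ p, ∑ i, (KerL α β A k p * KerR α β B k p) i i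
          ∂(((volume : Measure (Fin N → ℝ)).restrict (cube N)).prod
            ((volume : Measure (Fin N → ℝ)).restrict (cube N))) :=
        (integral_finset_sum _ fun i _ => hint i i).symm
    _ = _ := rfl

/-- the partial trace is cyclic: `τ_{α∪β}(𝒜ℬ) = τ_{α∪β}(ℬ𝒜)` for
partial-integral operators `𝒜 = ⟨A(k,x_α)·⟩_α` and `ℬ = ⟨B(k,x_β)·⟩_β` with
bounded measurable kernels. -/
theorem stmt_7 (N M : ℕ) (hM : 0 < M) (α β : Finset (Fin N))
    (A B : (Fin N → ℝ) → (Fin N → ℝ) → Matrix (Fin M) (Fin M) ℂ)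
    (hAmeas : ∀ i j, Measurable fun p : (Fin N → ℝ) × (Fin N → ℝ) => A p.1 p.2 i j)
    (hBmeas : ∀ i j, Measurable fun p : (Fin N → ℝ) × (Fin N → ℝ) => B p.1 p.2 i j)
    (hAbdd : ∃ c, ∀ k x i j, ‖A k x i j‖ ≤ c)
    (hBbdd : ∃ c, ∀ k x i j, ‖B k x i j‖ ≤ c)
    (hAdep : ∀ k x x', (∀ i ∈ α, x i = x' i) → A k x = A k x')
    (hBdep : ∀ k x x', (∀ i ∈ β, x i = x' i) → B k x = B k x') :
    ∀ k ∈ cube N,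
      pTrace (α ∪ β) (pComp α β A B) k = pTrace (β ∪ α) (pComp β α B A) k := by
  obtain ⟨cA, hcA⟩ := hAbdd
  obtain ⟨cB, hcB⟩ := hBbdd
  intro k _hk
  rw [pTrace_eq α β A B hAmeas hBmeas cA cB hcA hcB k,
      pTrace_eq β α B A hBmeas hAmeas cB cA hcB hcA k]
  have step1 : ∀ p, Matrix.trace (KerL α β A k p * KerR α β B k p) =
      Matrix.trace (KerR α β B k p * KerL α β A k p) := fun p => Matrix.trace_mul_comm _ _
  simp_rw [step1]
  rw [swapIntegral (α ∩ β) (fun p => Matrix.trace (KerR α β B k p * KerL α β A k p))]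
  congr 1
  funext p
  rw [swap_KerR, swap_KerL]
end
end

section
/- In a Banach algebra, if ‖A‖ < 1, ‖B‖ < 1 and ‖A + B + AB‖ < 1, then the convergent series d(X) := −∑_{n≥1} (−1)^n τ(X^n)/n, where τ is a continuous linear functional satisfying τ(XY) = τ(YX), satisfies d(A) + d(B) = d(A + B + AB); i.e. the 'log-determinant' defined via the trace is additive under the product (1+A)(1+B) = 1 + (A+B+AB). -/
open Filter Topology Metric Finset

section aux
variable {𝔄 : Type*} [NormedRing 𝔄] [NormedAlgebra ℂ 𝔄] [CompleteSpace 𝔄]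

lemma pow_hasDerivAt_aux (τ : 𝔄 →L[ℂ] ℂ) (hτ : ∀ X Y : 𝔄, τ (X * Y) = τ (Y * X))
    {X : ℂ → 𝔄} {x' : 𝔄} {t : ℂ} (h : HasDerivAt X x' t) (k : ℕ) :
    ∃ D : 𝔄, HasDerivAt (fun s => X s ^ k) D t ∧
      ∀ m : ℕ, τ (X t ^ m * D) = k * τ (X t ^ (m + k - 1) * x') := by
  induction k with
  | zero =>
    refine ⟨0, ?_, ?_⟩
    · simpa using hasDerivAt_const t (1 : 𝔄)
    · intro m; simp
  | succ k ih =>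
    obtain ⟨D, hD, hm⟩ := ih
    refine ⟨D * X t + X t ^ k * x', ?_, ?_⟩
    · simpa [pow_succ] using (show HasDerivAt (fun s => X s ^ k * X s) (D * X t + X t ^ k * x') t from hD.mul h)
    · intro m
      have h1 : X t ^ m * (D * X t + X t ^ k * x')
          = (X t ^ m * D) * X t + X t ^ (m + k) * x' := by
        rw [mul_add, ← mul_assoc, ← mul_assoc, ← pow_add]
      have h2 : τ ((X t ^ m * D) * X t) = (k : ℂ) * τ (X t ^ (m + k) * x') := by
        rw [hτ, ← mul_assoc, ← pow_succ']
        have := hm (m + 1)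
        have e : m + 1 + k - 1 = m + k := by omega
        rwa [e] at this
      have e2 : m + (k + 1) - 1 = m + k := by omega
      rw [h1, map_add, h2, e2]
      push_cast
      ring

lemma tau_pow_hasDerivAt (τ : 𝔄 →L[ℂ] ℂ) (hτ : ∀ X Y : 𝔄, τ (X * Y) = τ (Y * X))
    {X : ℂ → 𝔄} {x' : 𝔄} {t : ℂ} (h : HasDerivAt X x' t) (n : ℕ) :
    HasDerivAt (fun s => τ (X s ^ (n + 1))) (((n : ℂ) + 1) * τ (X t ^ n * x')) t := by
  obtain ⟨D, hD, hm⟩ := pow_hasDerivAt_aux τ hτ h (n + 1)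
  have h2 : HasDerivAt (fun s => τ (X s ^ (n + 1))) (τ D) t :=
    (τ.hasFDerivAt).comp_hasDerivAt t hD
  have h3 := hm 0
  simp only [pow_zero, one_mul, Nat.zero_add, Nat.add_sub_cancel] at h3
  rw [h3] at h2
  convert h2 using 2
  push_cast
  ring

lemma logSeries_hasDerivAt (τ : 𝔄 →L[ℂ] ℂ) (hτ : ∀ X Y : 𝔄, τ (X * Y) = τ (Y * X))
    {U : Set ℂ} (hU : IsOpen U) {X X' : ℂ → 𝔄}
    (hXd : ∀ s ∈ U, HasDerivAt X (X' s) s) (hX'c : ContinuousOn X' U)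
    (hXn : ∀ s ∈ U, ‖X s‖ < 1) {t : ℂ} (ht : t ∈ U) :
    HasDerivAt (fun s => ∑' n : ℕ, ((-1 : ℂ) ^ (n + 1) * τ (X s ^ (n + 1)) / (n + 1)))
      (-τ ((∑' n : ℕ, (-X t) ^ n) * X' t)) t := by
  classical
  set r : ℝ := (1 + ‖X t‖) / 2 with hr
  have hXt1 : ‖X t‖ < 1 := hXn t ht
  have hXtr : ‖X t‖ < r := by rw [hr]; linarith
  have hr1 : r < 1 := by rw [hr]; linarith
  have hr0 : 0 ≤ r := by rw [hr]; positivity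
  set M : ℝ := ‖X' t‖ + 1 with hM
  have hXc : ContinuousOn X U := fun s hs => ((hXd s hs).continuousAt).continuousWithinAt
  set E : Set ℂ := (U ∩ (fun s => ‖X s‖) ⁻¹' Set.Iio r) ∩
      (U ∩ (fun s => ‖X' s‖) ⁻¹' Set.Iio M) with hE
  have hEopen : IsOpen E :=
    (hXc.norm.isOpen_inter_preimage hU isOpen_Iio).inter
      (hX'c.norm.isOpen_inter_preimage hU isOpen_Iio)
  have htE : t ∈ E := ⟨⟨ht, hXtr⟩, ⟨ht, by simp [hM]⟩⟩
  have hEU : ∀ s ∈ E, s ∈ U := fun s hs => hs.1.1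
  have hEr : ∀ s ∈ E, ‖X s‖ < r := fun s hs => hs.1.2
  have hEM : ∀ s ∈ E, ‖X' s‖ ≤ M := fun s hs => le_of_lt hs.2.2
  -- summability of the main series on E
  have hsummable : ∀ s ∈ E, Summable
      (fun n : ℕ => ((-1 : ℂ) ^ (n + 1) * τ (X s ^ (n + 1)) / (n + 1))) := by
    intro s hs
    apply Summable.of_norm_bounded (g := fun n : ℕ => ‖τ‖ * r ^ (n + 1))
    · exact ((summable_geometric_of_lt_one hr0 hr1).mul_left _).comp_injective
        (add_left_injective 1)
    · intro n
      have h1 : ‖X s ^ (n + 1)‖ ≤ r ^ (n + 1) :=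
        le_trans (norm_pow_le' _ (Nat.succ_pos n))
          (pow_le_pow_left₀ (norm_nonneg _) (le_of_lt (hEr s hs)) _)
      have h2 : ‖τ (X s ^ (n + 1))‖ ≤ ‖τ‖ * r ^ (n + 1) :=
        le_trans (τ.le_opNorm _) (mul_le_mul_of_nonneg_left h1 (norm_nonneg _))
      have h3 : (1 : ℝ) ≤ ‖((n : ℂ) + 1)‖ := by
        rw [show ((n : ℂ) + 1) = ((n + 1 : ℕ) : ℂ) by push_cast; ring]
        rw [Complex.norm_natCast]
        exact_mod_cast Nat.succ_le_of_lt (Nat.succ_pos n)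
      calc ‖(-1 : ℂ) ^ (n + 1) * τ (X s ^ (n + 1)) / ((n : ℂ) + 1)‖
          = ‖τ (X s ^ (n + 1))‖ / ‖((n : ℂ) + 1)‖ := by
            rw [norm_div, norm_mul, norm_pow, norm_neg, norm_one, one_pow, one_mul]
        _ ≤ ‖τ (X s ^ (n + 1))‖ / 1 := by
            apply div_le_div_of_nonneg_left ?_ ?_ h3 <;> [exact norm_nonneg _; norm_num]
        _ = ‖τ (X s ^ (n + 1))‖ := by rw [div_one]
        _ ≤ ‖τ‖ * r ^ (n + 1) := h2
  -- the approximating sequence and its derivatives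
  set f : ℕ → ℂ → ℂ := fun N s =>
    ∑ n ∈ Finset.range N, ((-1 : ℂ) ^ (n + 1) * τ (X s ^ (n + 1)) / (n + 1)) with hf_def
  set f' : ℕ → ℂ → ℂ := fun N s => ∑ n ∈ Finset.range N, (-τ ((-X s) ^ n * X' s)) with hf'_def
  set g' : ℂ → ℂ := fun s => -τ ((∑' n : ℕ, (-X s) ^ n) * X' s) with hg'_def
  have key : ∀ (s : ℂ) (N : ℕ),
      f' N s = -τ ((∑ n ∈ Finset.range N, (-X s) ^ n) * X' s) := by
    intro s N
    rw [hf'_def]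
    simp only [Finset.sum_mul, map_sum, ← Finset.sum_neg_distrib]
  have hC0 : (0 : ℝ) < 1 - r := by linarith
  set C : ℝ := ‖τ‖ * ((1 - r)⁻¹ * M) with hC_def
  have hbound : ∀ N : ℕ, 1 ≤ N → ∀ s ∈ E, dist (g' s) (f' N s) ≤ C * r ^ N := by
    intro N hN1 s hs
    have hyr : ‖-X s‖ < r := by rw [norm_neg]; exact hEr s hs
    have hy : ‖-X s‖ < 1 := lt_trans hyr hr1
    have hysum : Summable (fun n : ℕ => (-X s) ^ n) := summable_geometric_of_norm_lt_one hy
    have hsplit := Summable.sum_add_tsum_nat_add (f := fun n : ℕ => (-X s) ^ n) N hysum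
    have hTP : (∑' n : ℕ, (-X s) ^ n) - (∑ n ∈ Finset.range N, (-X s) ^ n)
        = ∑' n : ℕ, (-X s) ^ (n + N) := by
      rw [← hsplit, add_sub_cancel_left]
    have hdiff : g' s - f' N s
        = -τ ((∑' n : ℕ, (-X s) ^ (n + N)) * X' s) := by
      rw [key s N, hg'_def, ← hTP, sub_mul, map_sub]
      ring
    have hgeoN : HasSum (fun n : ℕ => r ^ (n + N)) ((1 - r)⁻¹ * r ^ N) := by
      simpa [pow_add] using (hasSum_geometric_of_lt_one hr0 hr1).mul_right (r ^ N)
    have htail : ‖∑' n : ℕ, (-X s) ^ (n + N)‖ ≤ (1 - r)⁻¹ * r ^ N := by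
      apply tsum_of_norm_bounded hgeoN
      intro n
      calc ‖(-X s) ^ (n + N)‖ ≤ ‖-X s‖ ^ (n + N) := norm_pow_le' _ (by omega)
        _ ≤ r ^ (n + N) := pow_le_pow_left₀ (norm_nonneg _) (le_of_lt hyr) _
    calc dist (g' s) (f' N s) = ‖g' s - f' N s‖ := dist_eq_norm _ _
      _ = ‖τ ((∑' n : ℕ, (-X s) ^ (n + N)) * X' s)‖ := by rw [hdiff, norm_neg]
      _ ≤ ‖τ‖ * ‖(∑' n : ℕ, (-X s) ^ (n + N)) * X' s‖ := τ.le_opNorm _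
      _ ≤ ‖τ‖ * (‖∑' n : ℕ, (-X s) ^ (n + N)‖ * ‖X' s‖) :=
          mul_le_mul_of_nonneg_left (norm_mul_le _ _) (norm_nonneg _)
      _ ≤ ‖τ‖ * (((1 - r)⁻¹ * r ^ N) * M) := by
          apply mul_le_mul_of_nonneg_left ?_ (norm_nonneg _)
          apply mul_le_mul htail (hEM s hs) (norm_nonneg _)
          positivity
      _ = C * r ^ N := by rw [hC_def]; ring
  have hf'u : TendstoUniformlyOn f' g' atTop E := by
    rw [Metric.tendstoUniformlyOn_iff]
    intro ε hε
    have hCr : Tendsto (fun N : ℕ => C * r ^ N) atTop (𝓝 0) := by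
      simpa using (tendsto_pow_atTop_nhds_zero_of_lt_one hr0 hr1).const_mul C
    filter_upwards [eventually_ge_atTop 1, hCr.eventually (gt_mem_nhds hε)] with N hN1 hN2 s hs
    exact lt_of_le_of_lt (hbound N hN1 s hs) hN2
  have hfd : ∀ N : ℕ, ∀ s ∈ E, HasDerivAt (f N) (f' N s) s := by
    intro N s hs
    apply HasDerivAt.fun_sum
    intro n _
    have hbase := tau_pow_hasDerivAt τ hτ (hXd s (hEU s hs)) n
    have hder := (hbase.const_mul ((-1 : ℂ) ^ (n + 1))).div_const (((n : ℂ)) + 1)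
    have hne : ((n : ℂ) + 1) ≠ 0 := Nat.cast_add_one_ne_zero n
    have hneg : ((-X s) ^ n * X' s) = ((-1 : ℂ) ^ n) • (X s ^ n * X' s) := by
      rw [← neg_one_smul ℂ (X s), smul_pow, smul_mul_assoc]
    have h4 : τ ((-X s) ^ n * X' s) = (-1 : ℂ) ^ n * τ (X s ^ n * X' s) := by
      rw [hneg, map_smul, smul_eq_mul]
    have hval : (-1 : ℂ) ^ (n + 1) * (((n : ℂ) + 1) * τ (X s ^ n * X' s)) / ((n : ℂ) + 1)
        = -τ ((-X s) ^ n * X' s) := by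
      rw [h4]
      field_simp
      ring
    rw [← hval]
    exact hder
  have hfg : ∀ s ∈ E, Tendsto (fun N => f N s) atTop
      (𝓝 (∑' n : ℕ, ((-1 : ℂ) ^ (n + 1) * τ (X s ^ (n + 1)) / (n + 1)))) := by
    intro s hs
    exact (hsummable s hs).hasSum.tendsto_sum_nat
  exact hasDerivAt_of_tendstoUniformlyOn hEopen hf'u
    (Filter.Eventually.of_forall hfd) hfg htE

end aux

/-- in a unital Banach algebra with a continuous linear trace functional τ
(τ(XY) = τ(YX)), the log-determinant `d(X) = −∑_{n≥1} (−1)^n τ(X^n)/n` (convergent for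
`‖X‖ < 1`) is additive under the product `(1+A)(1+B) = 1 + (A+B+AB)`:
if `‖A‖ < 1`, `‖B‖ < 1` and `‖A+B+AB‖ < 1` then `d(A) + d(B) = d(A+B+AB)`. -/
theorem stmt_9 (𝔄 : Type*) [NormedRing 𝔄] [NormedAlgebra ℂ 𝔄] [CompleteSpace 𝔄]
    (τ : 𝔄 →L[ℂ] ℂ) (hτ : ∀ X Y : 𝔄, τ (X * Y) = τ (Y * X))
    (d : 𝔄 → ℂ)
    (hd : ∀ X : 𝔄, ‖X‖ < 1 →
      d X = -∑' n : ℕ, ((-1 : ℂ) ^ (n + 1) * τ (X ^ (n + 1)) / (n + 1)))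
    (A B : 𝔄) (hA : ‖A‖ < 1) (hB : ‖B‖ < 1) (hAB : ‖A + B + A * B‖ < 1) :
    d A + d B = d (A + B + A * B) := by
  classical
  set XA : ℂ → 𝔄 := fun s => s • A with hXA
  set XB : ℂ → 𝔄 := fun s => s • B with hXB
  set XC : ℂ → 𝔄 := fun s => s • A + s • B + (s * s) • (A * B) with hXC
  set XC' : ℂ → 𝔄 := fun s => A + B + (s + s) • (A * B) with hXC'
  -- derivatives of the curves
  have hdA : ∀ s : ℂ, HasDerivAt XA A s := fun s => by
    simpa using (hasDerivAt_id s).smul_const A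
  have hdB : ∀ s : ℂ, HasDerivAt XB B s := fun s => by
    simpa using (hasDerivAt_id s).smul_const B
  have hdC : ∀ s : ℂ, HasDerivAt XC (XC' s) s := fun s => by
    have h3 := (((hasDerivAt_id s).smul_const A).add ((hasDerivAt_id s).smul_const B)).add
      (((hasDerivAt_id s).mul (hasDerivAt_id s)).smul_const (A * B))
    rw [show XC' s = (1 : ℂ) • A + (1 : ℂ) • B + (1 * s + s * 1) • (A * B) from by
      rw [hXC']; module]
    exact h3
  -- continuity of the curves and their derivatives
  have hcA : Continuous XA := continuous_id.smul continuous_const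
  have hcB : Continuous XB := continuous_id.smul continuous_const
  have hcC : Continuous XC :=
    ((continuous_id.smul continuous_const).add (continuous_id.smul continuous_const)).add
      ((continuous_id.mul continuous_id).smul continuous_const)
  have hcC' : Continuous XC' :=
    continuous_const.add ((continuous_id.add continuous_id).smul continuous_const)
  -- the open set U₀
  set U₀ : Set ℂ := ({s | ‖XA s‖ < 1} ∩ {s | ‖XB s‖ < 1}) ∩ {s | ‖XC s‖ < 1} with hU₀
  have hU₀open : IsOpen U₀ := by
    apply IsOpen.inter
    apply IsOpen.inter
    · exact isOpen_Iio.preimage hcA.norm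
    · exact isOpen_Iio.preimage hcB.norm
    · exact isOpen_Iio.preimage hcC.norm
  have h0U₀ : (0 : ℂ) ∈ U₀ := by
    refine ⟨⟨?_, ?_⟩, ?_⟩ <;> simp [hXA, hXB, hXC]
  -- the real segment [0,1] sits inside U₀
  set K : Set ℂ := (fun x : ℝ => (x : ℂ)) '' Set.Icc 0 1 with hK
  have hKU₀ : K ⊆ U₀ := by
    rintro z ⟨x, ⟨hx0, hx1⟩, rfl⟩
    have hxn : ‖(x : ℂ)‖ = x := by
      rw [Complex.norm_real, Real.norm_eq_abs, abs_of_nonneg hx0]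
    have hq : ‖A * B‖ ≤ 1 :=
      le_trans (norm_mul_le _ _)
        (mul_le_one₀ (le_of_lt hA) (norm_nonneg _) (le_of_lt hB))
    refine ⟨⟨?_, ?_⟩, ?_⟩
    · show ‖(x : ℂ) • A‖ < 1
      rw [norm_smul, hxn]
      nlinarith [norm_nonneg A]
    · show ‖(x : ℂ) • B‖ < 1
      rw [norm_smul, hxn]
      nlinarith [norm_nonneg B]
    · show ‖XC (x : ℂ)‖ < 1
      have hsplit : XC (x : ℂ) = (x : ℂ) • (A + B + A * B)
          + ((x * x - x : ℝ) : ℂ) • (A * B) := by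
        rw [hXC]
        push_cast
        module
      have hxx : ‖((x * x - x : ℝ) : ℂ)‖ = x - x * x := by
        rw [Complex.norm_real, Real.norm_eq_abs, abs_of_nonpos (by nlinarith)]
        ring
      calc ‖XC (x : ℂ)‖ ≤ ‖(x : ℂ) • (A + B + A * B)‖
            + ‖((x * x - x : ℝ) : ℂ) • (A * B)‖ := by rw [hsplit]; exact norm_add_le _ _
        _ = x * ‖A + B + A * B‖ + (x - x * x) * ‖A * B‖ := by
            rw [norm_smul, norm_smul, hxn, hxx]
        _ < 1 := by
            have hxx0 : (0 : ℝ) ≤ x - x * x := by nlinarith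
            nlinarith [norm_nonneg (A + B + A * B), norm_nonneg (A * B),
              sq_nonneg (‖A + B + A * B‖ + 1 - 2 * x),
              mul_le_mul_of_nonneg_left hq hxx0]
  -- the connected component U of U₀ at 0
  set U : Set ℂ := connectedComponentIn U₀ 0 with hU
  have hUopen : IsOpen U := hU₀open.connectedComponentIn
  have hUpre : IsPreconnected U := isPreconnected_connectedComponentIn
  have hUsub : U ⊆ U₀ := connectedComponentIn_subset _ _
  have h0U : (0 : ℂ) ∈ U := mem_connectedComponentIn h0U₀
  have h0K : (0 : ℂ) ∈ K := ⟨0, ⟨le_refl 0, zero_le_one⟩, by simp⟩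
  have h1K : (1 : ℂ) ∈ K := ⟨1, ⟨zero_le_one, le_refl 1⟩, by simp⟩
  have hKpre : IsPreconnected K :=
    (isPreconnected_Icc).image _ Complex.continuous_ofReal.continuousOn
  have h1U : (1 : ℂ) ∈ U := hKpre.subset_connectedComponentIn h0K hKU₀ h1K
  -- the function F
  set F : ℂ → ℂ := fun s =>
    (∑' n : ℕ, ((-1 : ℂ) ^ (n + 1) * τ (XA s ^ (n + 1)) / (n + 1)))
    + (∑' n : ℕ, ((-1 : ℂ) ^ (n + 1) * τ (XB s ^ (n + 1)) / (n + 1)))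
    - (∑' n : ℕ, ((-1 : ℂ) ^ (n + 1) * τ (XC s ^ (n + 1)) / (n + 1))) with hF
  -- F has zero derivative on U
  have hF0 : ∀ t ∈ U, HasDerivAt F 0 t := by
    intro t ht
    have htA : ‖XA t‖ < 1 := (hUsub ht).1.1
    have htB : ‖XB t‖ < 1 := (hUsub ht).1.2
    have htC : ‖XC t‖ < 1 := (hUsub ht).2
    have hDA := logSeries_hasDerivAt τ hτ hUopen (X := XA) (X' := fun _ => A)
      (fun s _ => hdA s) continuousOn_const (fun s hs => (hUsub hs).1.1) ht
    have hDB := logSeries_hasDerivAt τ hτ hUopen (X := XB) (X' := fun _ => B)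
      (fun s _ => hdB s) continuousOn_const (fun s hs => (hUsub hs).1.2) ht
    have hDC := logSeries_hasDerivAt τ hτ hUopen (X := XC) (X' := XC')
      (fun s _ => hdC s) hcC'.continuousOn (fun s hs => (hUsub hs).2) ht
    have hcomb := (hDA.add hDB).sub hDC
    refine hcomb.congr_deriv ?_
    -- now show the derivative value is 0
    set SA : 𝔄 := ∑' n : ℕ, (-XA t) ^ n with hSA
    set SB : 𝔄 := ∑' n : ℕ, (-XB t) ^ n with hSB
    set SC : 𝔄 := ∑' n : ℕ, (-XC t) ^ n with hSC
    have hnA : ‖-XA t‖ < 1 := by rwa [norm_neg]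
    have hnB : ‖-XB t‖ < 1 := by rwa [norm_neg]
    have hnC : ‖-XC t‖ < 1 := by rwa [norm_neg]
    have hSA1 : SA * (1 + XA t) = 1 := by
      have := geom_series_mul_neg (-XA t) hnA
      rwa [sub_neg_eq_add] at this
    have hSA1' : (1 + XA t) * SA = 1 := by
      have := mul_neg_geom_series (-XA t) hnA
      rwa [sub_neg_eq_add] at this
    have hSB1 : SB * (1 + XB t) = 1 := by
      have := geom_series_mul_neg (-XB t) hnB
      rwa [sub_neg_eq_add] at this
    have hSB1' : (1 + XB t) * SB = 1 := by
      have := mul_neg_geom_series (-XB t) hnB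
      rwa [sub_neg_eq_add] at this
    have hSC1 : SC * (1 + XC t) = 1 := by
      have := geom_series_mul_neg (-XC t) hnC
      rwa [sub_neg_eq_add] at this
    -- factorization 1 + XC t = (1 + XA t)(1 + XB t)
    have hfact : (1 : 𝔄) + XC t = (1 + XA t) * (1 + XB t) := by
      rw [hXA, hXB, hXC]
      simp only [mul_add, add_mul, one_mul, mul_one, smul_mul_smul]
      abel
    have hSCfact : SC = SB * SA := by
      have h1 : ((1 : 𝔄) + XC t) * (SB * SA) = 1 := by
        rw [hfact]
        calc (1 + XA t) * (1 + XB t) * (SB * SA)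
            = (1 + XA t) * (((1 + XB t) * SB) * SA) := by rw [mul_assoc, mul_assoc]
          _ = (1 + XA t) * SA := by rw [hSB1', one_mul]
          _ = 1 := hSA1'
      calc SC = SC * (((1 : 𝔄) + XC t) * (SB * SA)) := by rw [h1, mul_one]
        _ = (SC * ((1 : 𝔄) + XC t)) * (SB * SA) := by rw [mul_assoc]
        _ = SB * SA := by rw [hSC1, one_mul]
    have hXC'fact : XC' t = A * (1 + XB t) + (1 + XA t) * B := by
      rw [hXC', hXA, hXB]
      simp only [mul_add, add_mul, one_mul, mul_one, mul_smul_comm, smul_mul_assoc, add_smul]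
      abel
    have hcancel : τ (SC * XC' t) = τ (SA * A) + τ (SB * B) := by
      rw [hXC'fact, hSCfact, mul_add, map_add]
      congr 1
      · calc τ (SB * SA * (A * (1 + XB t)))
            = τ ((SB * SA * A) * (1 + XB t)) := by rw [mul_assoc, mul_assoc, mul_assoc]
          _ = τ ((1 + XB t) * (SB * SA * A)) := hτ _ _
          _ = τ (((1 + XB t) * SB) * (SA * A)) := by rw [mul_assoc, mul_assoc]
          _ = τ (SA * A) := by rw [hSB1', one_mul]
      · calc τ (SB * SA * ((1 + XA t) * B))
            = τ (SB * ((SA * (1 + XA t)) * B)) := by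
              rw [mul_assoc, ← mul_assoc SA, ← mul_assoc]
          _ = τ (SB * B) := by rw [hSA1, one_mul]
    rw [hcancel]
    ring
  -- F is constant on U
  have hdiffU : DifferentiableOn ℂ F U := fun s hs =>
    (hF0 s hs).differentiableAt.differentiableWithinAt
  have hAn : AnalyticOnNhd ℂ F U := DifferentiableOn.analyticOnNhd (E := ℂ) hdiffU hUopen
  obtain ⟨ε, hε, hball⟩ := Metric.isOpen_iff.mp hUopen 0 h0U
  have hsmul0 : (ContinuousLinearMap.toSpanSingleton ℂ (0 : ℂ)) = 0 := by
    ext x; simp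
  have hfd0 : ∀ x ∈ ball (0 : ℂ) ε, fderivWithin ℂ F (ball (0 : ℂ) ε) x = 0 := by
    intro x hx
    have h1 : HasFDerivAt F (0 : ℂ →L[ℂ] ℂ) x := by
      have := (hF0 x (hball hx)).hasFDerivAt
      rwa [hsmul0] at this
    exact (h1.hasFDerivWithinAt).fderivWithin (isOpen_ball.uniqueDiffWithinAt hx)
  have heq : F =ᶠ[𝓝 (0 : ℂ)] fun _ => F 0 := by
    filter_upwards [ball_mem_nhds (0 : ℂ) hε] with y hy
    exact (convex_ball (0 : ℂ) ε).is_const_of_fderivWithin_eq_zero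
      (hdiffU.mono hball) hfd0 hy (mem_ball_self hε)
  have hconst : Set.EqOn F (fun _ => F 0) U :=
    hAn.eqOn_of_preconnected_of_eventuallyEq analyticOnNhd_const hUpre h0U heq
  -- F 0 = 0
  have hF0val : F 0 = 0 := by
    rw [hF]
    simp [hXA, hXB, hXC, zero_pow]
  have hF1 : F 1 = 0 := by rw [hconst h1U]; exact hF0val
  -- unfold F 1
  have hXA1 : XA 1 = A := by rw [hXA]; simp
  have hXB1 : XB 1 = B := by rw [hXB]; simp
  have hXC1 : XC 1 = A + B + A * B := by rw [hXC]; simp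
  simp only [hF] at hF1
  rw [hXA1, hXB1, hXC1] at hF1
  rw [hd A hA, hd B hB, hd (A + B + A * B) hAB]
  linear_combination -hF1
end
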